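/- Let M be any finite (possibly empty) product of the matrices M₁ = [[7,−6,6],[8,−7,7],[4,−4,3]], M₂ = [[7,6,−6],[8,7,−7],[4,3,−4]], M₃ = [[7,6,0],[8,7,0],[4,3,1]], M₄ = [[7,0,6],[8,0,7],[4,1,3]], M₅ = [[7,0,−6],[8,0,−7],[4,1,−4]], and let v be (7,8,5)ᵗ or (13,15,7)ᵗ. Then (a,b,c)ᵗ = M·v is a primitive Eisensteinian triplet with b > c and b ≠ 2c (in particular not equilateral), and its twin (a, b, b−c) is also a primitive Eisensteinian triplet. -/

import Mathlib

open Matrix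

/-- A primitive Eisensteinian triplet: positive integers with
`a² = b² + c² − bc` and `gcd(a,b,c) = 1`. -/
def IsPrimitiveEisenstein (a b c : ℤ) : Prop :=
  0 < a ∧ 0 < b ∧ 0 < c ∧ a ^ 2 = b ^ 2 + c ^ 2 - b * c ∧
    Int.gcd a (Int.gcd b c) = 1

/-- The five matrices `M₁, …, M₅`. -/
def Mmat : Fin 5 → Matrix (Fin 3) (Fin 3) ℤ
  | 0 => !![7, -6, 6; 8, -7, 7; 4, -4, 3]
  | 1 => !![7, 6, -6; 8, 7, -7; 4, 3, -4]
  | 2 => !![7, 6, 0; 8, 7, 0; 4, 3, 1]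
  | 3 => !![7, 0, 6; 8, 0, 7; 4, 1, 3]
  | 4 => !![7, 0, -6; 8, 0, -7; 4, 1, -4]

/-- The invariant preserved by the matrices. -/
def Inv3 (w : Fin 3 → ℤ) : Prop :=
  0 < w 0 ∧ 0 < w 2 ∧ w 2 < w 1 ∧ w 1 ≠ 2 * w 2 ∧
    (w 0) ^ 2 = (w 1) ^ 2 + (w 2) ^ 2 - w 1 * w 2 ∧
    Int.gcd (w 0) (Int.gcd (w 1) (w 2)) = 1

lemma gcd_step {a b c a' b' c' : ℤ} (p1 p2 p3 q1 q2 q3 r1 r2 r3 : ℤ)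
    (h : Int.gcd a (Int.gcd b c) = 1)
    (ha : a = p1 * a' + p2 * b' + p3 * c')
    (hb : b = q1 * a' + q2 * b' + q3 * c')
    (hc : c = r1 * a' + r2 * b' + r3 * c') :
    Int.gcd a' (Int.gcd b' c') = 1 := by
  set g : ℕ := Int.gcd a' (Int.gcd b' c') with hg
  have hda : (g : ℤ) ∣ a' := Int.gcd_dvd_left _ _
  have hdbc : (g : ℤ) ∣ (Int.gcd b' c' : ℤ) := Int.gcd_dvd_right _ _
  have hdb : (g : ℤ) ∣ b' := hdbc.trans (Int.gcd_dvd_left _ _)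
  have hdc : (g : ℤ) ∣ c' := hdbc.trans (Int.gcd_dvd_right _ _)
  have h1 : (g : ℤ) ∣ a := by
    rw [ha]; exact dvd_add (dvd_add (hda.mul_left p1) (hdb.mul_left p2)) (hdc.mul_left p3)
  have h2 : (g : ℤ) ∣ b := by
    rw [hb]; exact dvd_add (dvd_add (hda.mul_left q1) (hdb.mul_left q2)) (hdc.mul_left q3)
  have h3 : (g : ℤ) ∣ c := by
    rw [hc]; exact dvd_add (dvd_add (hda.mul_left r1) (hdb.mul_left r2)) (hdc.mul_left r3)
  have hdall : (g : ℤ) ∣ (Int.gcd a (Int.gcd b c) : ℤ) := Int.dvd_coe_gcd h1 (Int.dvd_coe_gcd h2 h3)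
  rw [h] at hdall
  exact Nat.dvd_one.mp (Int.ofNat_dvd.mp (by exact_mod_cast hdall))

lemma inv3_mk {x y z : ℤ} (h1 : 0 < x) (h2 : 0 < z) (h3 : z < y) (h4 : y ≠ 2 * z)
    (h5 : x ^ 2 = y ^ 2 + z ^ 2 - y * z) (h6 : Int.gcd x (Int.gcd y z) = 1) :
    Inv3 ![x, y, z] := by
  refine ⟨?_, ?_, ?_, ?_, ?_, ?_⟩ <;>
    simp only [Matrix.cons_val_zero, Matrix.cons_val_one, Matrix.head_cons,
      Matrix.cons_val_two, Matrix.tail_cons] <;> assumption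

lemma step (i : Fin 5) (w : Fin 3 → ℤ) (hw : Inv3 w) : Inv3 ((Mmat i).mulVec w) := by
  obtain ⟨ha, hc, hcb, hne, heq, hgcd⟩ := hw
  set a := w 0 with h0
  set b := w 1 with h1
  set c := w 2 with h2
  have hab : a < b := by nlinarith
  have hca : c < a := by nlinarith
  have hbca : b - c < a := by nlinarith
  fin_cases i
  · show Inv3 ((Mmat 0).mulVec w)
    have e : (Mmat 0).mulVec w = ![7*a-6*b+6*c, 8*a-7*b+7*c, 4*a-4*b+3*c] := by
      funext j; fin_cases j <;>
        simp [Mmat, Matrix.mulVec, dotProduct, Fin.sum_univ_three, ← h0, ← h1, ← h2] <;> ring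
    rw [e]
    exact inv3_mk (by nlinarith) (by nlinarith) (by nlinarith) (by intro h; linarith) (by linear_combination heq)
      (gcd_step 7 (-6) 0 4 (-3) (-1) (-4) 4 (-1) hgcd (by ring) (by ring) (by ring))
  · show Inv3 ((Mmat 1).mulVec w)
    have e : (Mmat 1).mulVec w = ![7*a+6*b-6*c, 8*a+7*b-7*c, 4*a+3*b-4*c] := by
      funext j; fin_cases j <;>
        simp [Mmat, Matrix.mulVec, dotProduct, Fin.sum_univ_three, ← h0, ← h1, ← h2] <;> ring
    rw [e]
    exact inv3_mk (by nlinarith) (by nlinarith) (by nlinarith) (by intro h; linarith) (by linear_combination heq)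
      (gcd_step 7 (-6) 0 (-4) 4 (-1) 4 (-3) (-1) hgcd (by ring) (by ring) (by ring))
  · show Inv3 ((Mmat 2).mulVec w)
    have e : (Mmat 2).mulVec w = ![7*a+6*b, 8*a+7*b, 4*a+3*b+c] := by
      funext j; fin_cases j <;>
        simp [Mmat, Matrix.mulVec, dotProduct, Fin.sum_univ_three, ← h0, ← h1, ← h2] <;> ring
    rw [e]
    exact inv3_mk (by nlinarith) (by nlinarith) (by nlinarith) (by intro h; apply hne; linarith) (by linear_combination heq)
      (gcd_step 7 (-6) 0 (-8) 7 0 (-4) 3 1 hgcd (by ring) (by ring) (by ring))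
  · show Inv3 ((Mmat 3).mulVec w)
    have e : (Mmat 3).mulVec w = ![7*a+6*c, 8*a+7*c, 4*a+b+3*c] := by
      funext j; fin_cases j <;>
        simp [Mmat, Matrix.mulVec, dotProduct, Fin.sum_univ_three, ← h0, ← h1, ← h2] <;> ring
    rw [e]
    exact inv3_mk (by nlinarith) (by nlinarith) (by nlinarith) (by intro h; linarith) (by linear_combination heq)
      (gcd_step 7 (-6) 0 (-4) 3 1 (-8) 7 0 hgcd (by ring) (by ring) (by ring))
  · show Inv3 ((Mmat 4).mulVec w)
    have e : (Mmat 4).mulVec w = ![7*a-6*c, 8*a-7*c, 4*a+b-4*c] := by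
      funext j; fin_cases j <;>
        simp [Mmat, Matrix.mulVec, dotProduct, Fin.sum_univ_three, ← h0, ← h1, ← h2] <;> ring
    have key : (b + 3 * c) ^ 2 < (4 * a) ^ 2 := by
      nlinarith [mul_pos (show (0:ℤ) < 15 * b - 7 * c by linarith) (show (0:ℤ) < b - c by linarith)]
    have h4a : b + 3 * c < 4 * a :=
      lt_of_pow_lt_pow_left₀ 2 (by linarith) key
    rw [e]
    exact inv3_mk (by linarith) (by linarith) (by linarith) (by intro h; linarith) (by linear_combination heq)
      (gcd_step 7 (-6) 0 4 (-4) 1 8 (-7) 0 hgcd (by ring) (by ring) (by ring))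

lemma prod_inv (l : List (Fin 5)) (v : Fin 3 → ℤ)
    (hv : v = ![7, 8, 5] ∨ v = ![13, 15, 7]) :
    Inv3 ((l.map Mmat).prod.mulVec v) := by
  induction l with
  | nil =>
      simp only [List.map_nil, List.prod_nil, Matrix.one_mulVec]
      rcases hv with rfl | rfl
      · exact inv3_mk (by norm_num) (by norm_num) (by norm_num) (by norm_num) (by norm_num)
          (by norm_num [Int.gcd])
      · exact inv3_mk (by norm_num) (by norm_num) (by norm_num) (by norm_num) (by norm_num)
          (by norm_num [Int.gcd])
  | cons i t ih =>
      rw [List.map_cons, List.prod_cons, ← Matrix.mulVec_mulVec]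
      exact step i _ ih

/-- soundness: any finite product of the `Mᵢ` applied to
`(7,8,5)ᵗ` or `(13,15,7)ᵗ` yields a primitive Eisensteinian triplet `(a,b,c)`
with `b > c` and `b ≠ 2c`, whose twin `(a, b, b−c)` is also a primitive
Eisensteinian triplet. -/
theorem product_Mmat_is_eisenstein (l : List (Fin 5)) (v : Fin 3 → ℤ)
    (hv : v = ![7, 8, 5] ∨ v = ![13, 15, 7]) (a b c : ℤ)
    (h : (l.map Mmat).prod.mulVec v = ![a, b, c]) :
    IsPrimitiveEisenstein a b c ∧ b > c ∧ b ≠ 2 * c ∧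
      IsPrimitiveEisenstein a b (b - c) := by
  have H := prod_inv l v hv
  rw [h] at H
  obtain ⟨ha, hc, hcb, hne, heq, hgcd⟩ := H
  simp only [Matrix.cons_val_zero, Matrix.cons_val_one, Matrix.head_cons,
    Matrix.cons_val_two, Matrix.tail_cons] at ha hc hcb hne heq hgcd
  refine ⟨⟨ha, hc.trans hcb, hc, heq, hgcd⟩, hcb, hne,
    ha, hc.trans hcb, sub_pos.mpr hcb, by linear_combination heq, ?_⟩
  exact gcd_step 1 0 0 0 1 0 0 1 (-1) hgcd (by ring) (by ring) (by ring)
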